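/- arXiv:2303.13333 — 8 statements merged into one kernel-verified Lean document; each statement's English description precedes it below -/
import Mathlib

section
/- The Sergeev map T(x,y,z) = (xy/(y+xz), xz/k, (y+xz)/x) on triples of nonzero complex numbers satisfies the functional tetrahedron (Zamolodchikov) equation T^{123} ∘ T^{145} ∘ T^{246} ∘ T^{356} = T^{356} ∘ T^{246} ∘ T^{145} ∘ T^{123} as maps on six-tuples, wherever all denominators are nonzero. -/
/-- The Sergeev tetrahedron map `T(x,y,z) = (xy/(y+xz), xz/k, (y+xz)/x)`. -/
noncomputable def sergeevT (k : ℂ) : ℂ × ℂ × ℂ → ℂ × ℂ × ℂ :=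
  fun (x, y, z) => (x * y / (y + x * z), x * z / k, (y + x * z) / x)

/-- The denominators occurring in the Sergeev map are nonzero. -/
def sergeevOk : ℂ × ℂ × ℂ → Prop :=
  fun (x, y, _z) => y + x * (_z) ≠ 0 ∧ x ≠ 0

section Lifts
variable (T : ℂ × ℂ × ℂ → ℂ × ℂ × ℂ)

/-- `T` acting on coordinates 1,2,3 of a 6-tuple. -/
def lift123 : ℂ × ℂ × ℂ × ℂ × ℂ × ℂ → ℂ × ℂ × ℂ × ℂ × ℂ × ℂ :=
  fun (a, b, c, d, e, f) =>
    let t := T (a, b, c); (t.1, t.2.1, t.2.2, d, e, f)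

/-- `T` acting on coordinates 1,4,5 of a 6-tuple. -/
def lift145 : ℂ × ℂ × ℂ × ℂ × ℂ × ℂ → ℂ × ℂ × ℂ × ℂ × ℂ × ℂ :=
  fun (a, b, c, d, e, f) =>
    let t := T (a, d, e); (t.1, b, c, t.2.1, t.2.2, f)

/-- `T` acting on coordinates 2,4,6 of a 6-tuple. -/
def lift246 : ℂ × ℂ × ℂ × ℂ × ℂ × ℂ → ℂ × ℂ × ℂ × ℂ × ℂ × ℂ :=
  fun (a, b, c, d, e, f) =>
    let t := T (b, d, f); (a, t.1, c, t.2.1, e, t.2.2)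

/-- `T` acting on coordinates 3,5,6 of a 6-tuple. -/
def lift356 : ℂ × ℂ × ℂ × ℂ × ℂ × ℂ → ℂ × ℂ × ℂ × ℂ × ℂ × ℂ :=
  fun (a, b, c, d, e, f) =>
    let t := T (c, e, f); (a, b, t.1, d, t.2.1, t.2.2)

end Lifts

/-- Projection on coordinates 1,2,3. -/
def proj123 : ℂ × ℂ × ℂ × ℂ × ℂ × ℂ → ℂ × ℂ × ℂ :=
  fun (a, b, c, _, _, _) => (a, b, c)

/-- Projection on coordinates 1,4,5. -/
def proj145 : ℂ × ℂ × ℂ × ℂ × ℂ × ℂ → ℂ × ℂ × ℂ :=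
  fun (a, _, _, d, e, _) => (a, d, e)

/-- Projection on coordinates 2,4,6. -/
def proj246 : ℂ × ℂ × ℂ × ℂ × ℂ × ℂ → ℂ × ℂ × ℂ :=
  fun (_, b, _, d, _, f) => (b, d, f)

/-- Projection on coordinates 3,5,6. -/
def proj356 : ℂ × ℂ × ℂ × ℂ × ℂ × ℂ → ℂ × ℂ × ℂ :=
  fun (_, _, c, _, e, f) => (c, e, f)

/-! Both sides are evaluated in closed form. An application `T (x, y, z) = (x', y', z')` is pinned
down by `x z' = y + x z`, `x' z' = y` and `k y' = x z`, so each of the eight steps reduces to a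
polynomial identity. With `E₁ = e + c f`, `E₂ = c d + b E₁`, `E₃ = b E₁ + a c² f`, `F₁ = b + a c` and
`F₂ = d F₁ + a b e`, the last step of each side rests on one factorisation,
`d E₃ + a e E₂ = E₁ F₂` and `c F₂ + b E₃ = F₁ E₂` respectively, and both sides come out as
`(a b d / F₂, a b c e / (k E₃), c F₂ / (a E₂), a c f / k², E₃ / (a c k), E₂ / (b c))`. -/

theorem sergeevT_eq {k x y z x' y' z' : ℂ} (hk : k ≠ 0) (hx : x ≠ 0) (hz' : z' ≠ 0)
    (hz'_eq : x * z' = y + x * z) (hx'_eq : x' * z' = y) (hy'_eq : k * y' = x * z) :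
    sergeevT k (x, y, z) = (x', y', z') := by
  change (x * y / (y + x * z), x * z / k, (y + x * z) / x) = _
  rw [← hz'_eq, ← hx'_eq, ← hy'_eq]
  ext <;> field_simp

section
variable {k a b c d e f : ℂ}

theorem lift123_lift145_lift246_lift356_sergeevT (hk : k ≠ 0) (ha : a ≠ 0) (hb : b ≠ 0)
    (hc : c ≠ 0) (hE₁ : e + c * f ≠ 0) (hE₂ : c * d + b * (e + c * f) ≠ 0)
    (hE₃ : b * (e + c * f) + a * c ^ 2 * f ≠ 0) (hF₂ : d * (b + a * c) + a * b * e ≠ 0) :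
    lift123 (sergeevT k) (lift145 (sergeevT k) (lift246 (sergeevT k)
      (lift356 (sergeevT k) (a, b, c, d, e, f)))) =
      (a * b * d / (d * (b + a * c) + a * b * e),
        a * b * c * e / (k * (b * (e + c * f) + a * c ^ 2 * f)),
        c * (d * (b + a * c) + a * b * e) / (a * (c * d + b * (e + c * f))), a * c * f / k ^ 2,
        (b * (e + c * f) + a * c ^ 2 * f) / (a * c * k), (c * d + b * (e + c * f)) / (b * c)) := by
  have step₁ : sergeevT k (c, e, f) = (c * e / (e + c * f), c * f / k, (e + c * f) / c) := rfl
  have step₂ : sergeevT k (b, d, (e + c * f) / c) = (b * c * d / (c * d + b * (e + c * f)),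
      b * (e + c * f) / (c * k), (c * d + b * (e + c * f)) / (b * c)) :=
    sergeevT_eq hk hb (by positivity) (by field_simp) (by field_simp) (by field_simp)
  have step₃ : sergeevT k (a, b * (e + c * f) / (c * k), c * f / k) =
      (a * b * (e + c * f) / (b * (e + c * f) + a * c ^ 2 * f), a * c * f / k ^ 2,
        (b * (e + c * f) + a * c ^ 2 * f) / (a * c * k)) :=
    sergeevT_eq hk ha (by positivity) (by field_simp) (by field_simp) (by field_simp)
  have step₄ : sergeevT k (a * b * (e + c * f) / (b * (e + c * f) + a * c ^ 2 * f),
      b * c * d / (c * d + b * (e + c * f)), c * e / (e + c * f)) =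
      (a * b * d / (d * (b + a * c) + a * b * e),
        a * b * c * e / (k * (b * (e + c * f) + a * c ^ 2 * f)),
        c * (d * (b + a * c) + a * b * e) / (a * (c * d + b * (e + c * f)))) :=
    sergeevT_eq hk (by positivity) (by positivity) (by field_simp; ring) (by field_simp)
      (by field_simp)
  simp only [lift356, lift246, lift145, lift123, step₁, step₂, step₃, step₄]

theorem lift356_lift246_lift145_lift123_sergeevT (hk : k ≠ 0) (ha : a ≠ 0) (hb : b ≠ 0)
    (hc : c ≠ 0) (hE₂ : c * d + b * (e + c * f) ≠ 0)
    (hE₃ : b * (e + c * f) + a * c ^ 2 * f ≠ 0) (hF₁ : b + a * c ≠ 0)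
    (hF₂ : d * (b + a * c) + a * b * e ≠ 0) :
    lift356 (sergeevT k) (lift246 (sergeevT k) (lift145 (sergeevT k)
      (lift123 (sergeevT k) (a, b, c, d, e, f)))) =
      (a * b * d / (d * (b + a * c) + a * b * e),
        a * b * c * e / (k * (b * (e + c * f) + a * c ^ 2 * f)),
        c * (d * (b + a * c) + a * b * e) / (a * (c * d + b * (e + c * f))), a * c * f / k ^ 2,
        (b * (e + c * f) + a * c ^ 2 * f) / (a * c * k), (c * d + b * (e + c * f)) / (b * c)) := by
  have step₁ : sergeevT k (a, b, c) = (a * b / (b + a * c), a * c / k, (b + a * c) / a) := rfl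
  have step₂ : sergeevT k (a * b / (b + a * c), d, e) =
      (a * b * d / (d * (b + a * c) + a * b * e), a * b * e / (k * (b + a * c)),
        (d * (b + a * c) + a * b * e) / (a * b)) :=
    sergeevT_eq hk (by positivity) (by positivity) (by field_simp) (by field_simp) (by field_simp)
  have step₃ : sergeevT k (a * c / k, a * b * e / (k * (b + a * c)), f) =
      (a * b * c * e / (k * (b * (e + c * f) + a * c ^ 2 * f)), a * c * f / k ^ 2,
        (b * (e + c * f) + a * c ^ 2 * f) / c / (b + a * c)) :=
    sergeevT_eq hk (by positivity) (by positivity) (by field_simp; ring) (by field_simp)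
      (by field_simp)
  have step₄ : sergeevT k ((b + a * c) / a, (d * (b + a * c) + a * b * e) / (a * b),
      (b * (e + c * f) + a * c ^ 2 * f) / c / (b + a * c)) =
      (c * (d * (b + a * c) + a * b * e) / (a * (c * d + b * (e + c * f))),
        (b * (e + c * f) + a * c ^ 2 * f) / (a * c * k), (c * d + b * (e + c * f)) / (b * c)) :=
    sergeevT_eq hk (by positivity) (by positivity) (by field_simp [hF₁]; ring) (by field_simp)
      (by rw [div_mul_div_cancel₀' hF₁]; field_simp)
  simp only [lift356, lift246, lift145, lift123, step₁, step₂, step₃, step₄]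

end

theorem sergeev_tetrahedron_general (k : ℂ) (hk : k ≠ 0) (p : ℂ × ℂ × ℂ × ℂ × ℂ × ℂ)
    (h1 : sergeevOk (proj356 p))
    (h2 : sergeevOk (proj246 (lift356 (sergeevT k) p)))
    (h3 : sergeevOk (proj145 (lift246 (sergeevT k) (lift356 (sergeevT k) p))))
    (h5 : sergeevOk (proj123 p))
    (h6 : sergeevOk (proj145 (lift123 (sergeevT k) p))) :
    lift123 (sergeevT k) (lift145 (sergeevT k) (lift246 (sergeevT k) (lift356 (sergeevT k) p)))
      = lift356 (sergeevT k) (lift246 (sergeevT k) (lift145 (sergeevT k) (lift123 (sergeevT k) p))) := by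
  obtain ⟨a, b, c, d, e, f⟩ := p
  obtain ⟨hE₁, hc⟩ : e + c * f ≠ 0 ∧ c ≠ 0 := h1
  obtain ⟨hs₂, hb⟩ : d + b * ((e + c * f) / c) ≠ 0 ∧ b ≠ 0 := h2
  obtain ⟨hs₃, ha⟩ : b * ((e + c * f) / c) / k + a * (c * f / k) ≠ 0 ∧ a ≠ 0 := h3
  obtain ⟨hF₁, -⟩ : b + a * c ≠ 0 ∧ a ≠ 0 := h5
  obtain ⟨hs₆, -⟩ : d + a * b / (b + a * c) * e ≠ 0 ∧ a * b / (b + a * c) ≠ 0 := h6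
  have hE₂ : c * d + b * (e + c * f) ≠ 0 := by
    rw [show d + b * ((e + c * f) / c) = (c * d + b * (e + c * f)) / c by field_simp] at hs₂
    exact (div_ne_zero_iff.1 hs₂).1
  have hE₃ : b * (e + c * f) + a * c ^ 2 * f ≠ 0 := by
    rw [show b * ((e + c * f) / c) / k + a * (c * f / k) =
      (b * (e + c * f) + a * c ^ 2 * f) / (c * k) by field_simp] at hs₃
    exact (div_ne_zero_iff.1 hs₃).1
  have hF₂ : d * (b + a * c) + a * b * e ≠ 0 := by
    rw [show d + a * b / (b + a * c) * e = (d * (b + a * c) + a * b * e) / (b + a * c) by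
      field_simp] at hs₆
    exact (div_ne_zero_iff.1 hs₆).1
  rw [lift123_lift145_lift246_lift356_sergeevT hk ha hb hc hE₁ hE₂ hE₃ hF₂,
    lift356_lift246_lift145_lift123_sergeevT hk ha hb hc hE₂ hE₃ hF₁ hF₂]

/-- The Sergeev map satisfies the functional tetrahedron (Zamolodchikov) equation,
wherever all denominators arising in the compositions are nonzero. -/
theorem sergeev_tetrahedron (k : ℂ) (hk : k ≠ 0) (p : ℂ × ℂ × ℂ × ℂ × ℂ × ℂ)
    (h1 : sergeevOk (proj356 p))
    (h2 : sergeevOk (proj246 (lift356 (sergeevT k) p)))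
    (h3 : sergeevOk (proj145 (lift246 (sergeevT k) (lift356 (sergeevT k) p))))
    (h4 : sergeevOk (proj123 (lift145 (sergeevT k) (lift246 (sergeevT k) (lift356 (sergeevT k) p)))))
    (h5 : sergeevOk (proj123 p))
    (h6 : sergeevOk (proj145 (lift123 (sergeevT k) p)))
    (h7 : sergeevOk (proj246 (lift145 (sergeevT k) (lift123 (sergeevT k) p))))
    (h8 : sergeevOk (proj356 (lift246 (sergeevT k) (lift145 (sergeevT k) (lift123 (sergeevT k) p))))) :
    lift123 (sergeevT k) (lift145 (sergeevT k) (lift246 (sergeevT k) (lift356 (sergeevT k) p)))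
      = lift356 (sergeevT k) (lift246 (sergeevT k) (lift145 (sergeevT k) (lift123 (sergeevT k) p))) :=
  sergeev_tetrahedron_general k hk p h1 h2 h3 h5 h6
end

section
/- The map S₂(x₁,x₂,y₁,y₂,z₁,z₂,t₁,t₂) = (x₁y₁z₂/(x₁z₁+y₁z₂), x₂, x₁z₁/k, z₂, x₂(x₁z₁+y₁z₂)/(x₁z₂), y₂, t₁z₂/x₂, t₂z₂/y₂) on ℂ⁸ satisfies the set-theoretical 4-simplex equation, wherever all denominators are nonzero. -/
/-- The Sergeev-type 4-simplex map `S₂`. -/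
noncomputable def sergeevS2 (k : ℂ) :
    (ℂ × ℂ) × (ℂ × ℂ) × (ℂ × ℂ) × (ℂ × ℂ) → (ℂ × ℂ) × (ℂ × ℂ) × (ℂ × ℂ) × (ℂ × ℂ) :=
  fun ((x1, x2), (y1, y2), (z1, z2), (t1, t2)) =>
    ((x1 * y1 * z2 / (x1 * z1 + y1 * z2), x2),
     (x1 * z1 / k, z2),
     (x2 * (x1 * z1 + y1 * z2) / (x1 * z2), y2),
     (t1 * z2 / x2, t2 * z2 / y2))

/-- All denominators occurring in `S₂` are nonzero. -/
def sergeevS2Ok : (ℂ × ℂ) × (ℂ × ℂ) × (ℂ × ℂ) × (ℂ × ℂ) → Prop :=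
  fun ((x1, x2), (y1, y2), (z1, z2), (t1, t2)) =>
    x1 * z1 + y1 * z2 ≠ 0 ∧ x1 ≠ 0 ∧ z2 ≠ 0 ∧ x2 ≠ 0 ∧ y2 ≠ 0

section Lifts
variable {X : Type*} (S : X × X × X × X → X × X × X × X)

/-- `S` acting on factors 1,2,3,4 of a 10-tuple. -/
def lift1234 : X × X × X × X × X × X × X × X × X × X → X × X × X × X × X × X × X × X × X × X :=
  fun (p1, p2, p3, p4, p5, p6, p7, p8, p9, p10) =>
    let q := S (p1, p2, p3, p4)
    (q.1, q.2.1, q.2.2.1, q.2.2.2, p5, p6, p7, p8, p9, p10)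

/-- `S` acting on factors 1,5,6,7 of a 10-tuple. -/
def lift1567 : X × X × X × X × X × X × X × X × X × X → X × X × X × X × X × X × X × X × X × X :=
  fun (p1, p2, p3, p4, p5, p6, p7, p8, p9, p10) =>
    let q := S (p1, p5, p6, p7)
    (q.1, p2, p3, p4, q.2.1, q.2.2.1, q.2.2.2, p8, p9, p10)

/-- `S` acting on factors 2,5,8,9 of a 10-tuple. -/
def lift2589 : X × X × X × X × X × X × X × X × X × X → X × X × X × X × X × X × X × X × X × X :=
  fun (p1, p2, p3, p4, p5, p6, p7, p8, p9, p10) =>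
    let q := S (p2, p5, p8, p9)
    (p1, q.1, p3, p4, q.2.1, p6, p7, q.2.2.1, q.2.2.2, p10)

/-- `S` acting on factors 3,6,8,10 of a 10-tuple. -/
def lift368X : X × X × X × X × X × X × X × X × X × X → X × X × X × X × X × X × X × X × X × X :=
  fun (p1, p2, p3, p4, p5, p6, p7, p8, p9, p10) =>
    let q := S (p3, p6, p8, p10)
    (p1, p2, q.1, p4, p5, q.2.1, p7, q.2.2.1, p9, q.2.2.2)

/-- `S` acting on factors 4,7,9,10 of a 10-tuple. -/
def lift479X : X × X × X × X × X × X × X × X × X × X → X × X × X × X × X × X × X × X × X × X :=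
  fun (p1, p2, p3, p4, p5, p6, p7, p8, p9, p10) =>
    let q := S (p4, p7, p9, p10)
    (p1, p2, p3, q.1, p5, p6, q.2.1, p8, q.2.2.1, q.2.2.2)

end Lifts

section Projs
variable {X : Type*}

/-- Projection on factors 1,2,3,4. -/
def proj1234 : X × X × X × X × X × X × X × X × X × X → X × X × X × X :=
  fun (p1, p2, p3, p4, _, _, _, _, _, _) => (p1, p2, p3, p4)

/-- Projection on factors 1,5,6,7. -/
def proj1567 : X × X × X × X × X × X × X × X × X × X → X × X × X × X :=
  fun (p1, _, _, _, p5, p6, p7, _, _, _) => (p1, p5, p6, p7)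

/-- Projection on factors 2,5,8,9. -/
def proj2589 : X × X × X × X × X × X × X × X × X × X → X × X × X × X :=
  fun (_, p2, _, _, p5, _, _, p8, p9, _) => (p2, p5, p8, p9)

/-- Projection on factors 3,6,8,10. -/
def proj368X : X × X × X × X × X × X × X × X × X × X → X × X × X × X :=
  fun (_, _, p3, _, _, p6, _, p8, _, p10) => (p3, p6, p8, p10)

/-- Projection on factors 4,7,9,10. -/
def proj479X : X × X × X × X × X × X × X × X × X × X → X × X × X × X :=
  fun (_, _, _, p4, _, _, p7, _, p9, p10) => (p4, p7, p9, p10)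

end Projs

/-!
Both sides are computed in closed form, one application of `S₂` at a time (the ten factors are
named `x, y, z, t, a, b, c, d, e, f`). At every step the only non-monomial quantity is the
denominator `x₁z₁ + y₁z₂` of `S₂` evaluated at the current arguments, and it is always a
Laurent monomial times one of `D = x₁z₁ + y₁z₂`, `P = t₁e₁ + c₁e₂`, `Q = z₁d₁ + b₁d₂` or the
polynomials `R, U, W` of `sergeevS2FourSimplexValue`; the hypotheses say precisely that these
do not vanish. The two sides meet through `x₁b₁R + a₁b₂U = QW` on the left and
`y₁z₂U + z₁d₂W = DR` on the right: with these polynomials treated as nonzero atoms, the two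
sides agree component by component as Laurent monomials.
-/

section Lifts
variable {X : Type*} {S : X × X × X × X → X × X × X × X}
  {p1 p2 p3 p4 p5 p6 p7 p8 p9 p10 q1 q2 q3 q4 : X}

theorem lift1234_eq (h : S (p1, p2, p3, p4) = (q1, q2, q3, q4)) :
    lift1234 S (p1, p2, p3, p4, p5, p6, p7, p8, p9, p10) =
      (q1, q2, q3, q4, p5, p6, p7, p8, p9, p10) := by
  simp only [lift1234, h]

theorem lift1567_eq (h : S (p1, p5, p6, p7) = (q1, q2, q3, q4)) :
    lift1567 S (p1, p2, p3, p4, p5, p6, p7, p8, p9, p10) =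
      (q1, p2, p3, p4, q2, q3, q4, p8, p9, p10) := by
  simp only [lift1567, h]

theorem lift2589_eq (h : S (p2, p5, p8, p9) = (q1, q2, q3, q4)) :
    lift2589 S (p1, p2, p3, p4, p5, p6, p7, p8, p9, p10) =
      (p1, q1, p3, p4, q2, p6, p7, q3, q4, p10) := by
  simp only [lift2589, h]

theorem lift368X_eq (h : S (p3, p6, p8, p10) = (q1, q2, q3, q4)) :
    lift368X S (p1, p2, p3, p4, p5, p6, p7, p8, p9, p10) =
      (p1, p2, q1, p4, p5, q2, p7, q3, p9, q4) := by
  simp only [lift368X, h]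

theorem lift479X_eq (h : S (p4, p7, p9, p10) = (q1, q2, q3, q4)) :
    lift479X S (p1, p2, p3, p4, p5, p6, p7, p8, p9, p10) =
      (p1, p2, p3, q1, p5, p6, q2, p8, q3, q4) := by
  simp only [lift479X, h]

end Lifts

section SumEq
variable {k x1 x2 y1 y2 z1 z2 t1 t2 D : ℂ}

theorem sergeevS2_eq_of_sum_eq (hD : x1 * z1 + y1 * z2 = D) :
    sergeevS2 k ((x1, x2), (y1, y2), (z1, z2), (t1, t2)) =
      ((x1 * y1 * z2 / D, x2), (x1 * z1 / k, z2), (x2 * D / (x1 * z2), y2),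
        (t1 * z2 / x2, t2 * z2 / y2)) := by
  subst hD; rfl

theorem sergeevS2Ok_iff_of_sum_eq_div {N M : ℂ} (hD : x1 * z1 + y1 * z2 = N / M) (hM : M ≠ 0) :
    sergeevS2Ok ((x1, x2), (y1, y2), (z1, z2), (t1, t2)) ↔
      N ≠ 0 ∧ x1 ≠ 0 ∧ z2 ≠ 0 ∧ x2 ≠ 0 ∧ y2 ≠ 0 := by
  simp only [sergeevS2Ok, hD, div_ne_zero_iff, hM, ne_eq, not_false_eq_true, and_true]

end SumEq

noncomputable def sergeevS2FourSimplexValue (k : ℂ) :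
    (ℂ × ℂ) × (ℂ × ℂ) × (ℂ × ℂ) × (ℂ × ℂ) × (ℂ × ℂ) × (ℂ × ℂ) × (ℂ × ℂ) × (ℂ × ℂ) × (ℂ × ℂ) ×
        (ℂ × ℂ) →
      (ℂ × ℂ) × (ℂ × ℂ) × (ℂ × ℂ) × (ℂ × ℂ) × (ℂ × ℂ) × (ℂ × ℂ) × (ℂ × ℂ) × (ℂ × ℂ) × (ℂ × ℂ) ×
        (ℂ × ℂ) :=
  fun ((x1, x2), (y1, y2), (z1, z2), (t1, t2), (a1, a2), (b1, b2), (c1, c2), (d1, d2), (e1, e2),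
      (f1, f2)) =>
    let P := t1 * e1 + c1 * e2
    let R := y1 * z2 * (z1 * d1 + b1 * d2) + z1 * d2 * a1 * b2
    let U := x1 * z1 ^ 2 * d1 + y1 * z2 * (z1 * d1 + b1 * d2)
    let W := x1 * y1 * z2 * b1 + (x1 * z1 + y1 * z2) * a1 * b2
    ((x1 * y1 * z2 * a1 * b2 / W, x2), (x1 * y1 * z1 * z2 * b1 * d2 / (k * U), z2),
      (x2 * z1 * d2 * W / (x1 * z2 * R), y2), (t1 * c1 * e2 * z2 / (x2 * P), t2 * z2 / y2),
      (x1 * z1 * d1 / k ^ 2, d2), (x2 * U / (k * x1 * z1 * d2), b2),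
      (t1 * e1 * d2 / (k * x2), e2 * d2 / b2), (y2 * R / (y1 * z1 * b2 * d2), a2),
      (t2 * b2 * P / (t1 * y2 * e2), c2 * b2 / a2),
      (f1 * d2 * e2 / (z2 * t2), f2 * d2 * e2 / (b2 * c2)))

theorem sergeevS2_fourSimplex_lhs_eq {k : ℂ} (hk : k ≠ 0)
    (p : (ℂ × ℂ) × (ℂ × ℂ) × (ℂ × ℂ) × (ℂ × ℂ) × (ℂ × ℂ) × (ℂ × ℂ) × (ℂ × ℂ) × (ℂ × ℂ) ×
      (ℂ × ℂ) × (ℂ × ℂ))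
    (h1 : sergeevS2Ok (proj479X p))
    (h2 : sergeevS2Ok (proj368X (lift479X (sergeevS2 k) p)))
    (h3 : sergeevS2Ok (proj2589 (lift368X (sergeevS2 k) (lift479X (sergeevS2 k) p))))
    (h4 : sergeevS2Ok (proj1567
      (lift2589 (sergeevS2 k) (lift368X (sergeevS2 k) (lift479X (sergeevS2 k) p)))))
    (h5 : sergeevS2Ok (proj1234 (lift1567 (sergeevS2 k)
      (lift2589 (sergeevS2 k) (lift368X (sergeevS2 k) (lift479X (sergeevS2 k) p)))))) :
    lift1234 (sergeevS2 k) (lift1567 (sergeevS2 k)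
      (lift2589 (sergeevS2 k) (lift368X (sergeevS2 k) (lift479X (sergeevS2 k) p)))) =
        sergeevS2FourSimplexValue k p := by
  obtain ⟨⟨x1, x2⟩, ⟨y1, y2⟩, ⟨z1, z2⟩, ⟨t1, t2⟩, ⟨a1, a2⟩, ⟨b1, b2⟩, ⟨c1, c2⟩, ⟨d1, d2⟩, ⟨e1, e2⟩,
    ⟨f1, f2⟩⟩ := p
  obtain ⟨hP, ht1, he2, ht2, hc2⟩ := h1
  rw [lift479X_eq (sergeevS2_eq_of_sum_eq rfl)] at h2 h3 h4 h5 ⊢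
  obtain ⟨hQ, hz1, hd2, hz2, hb2⟩ := h2
  rw [lift368X_eq (sergeevS2_eq_of_sum_eq rfl)] at h3 h4 h5 ⊢
  have sR : y1 * (z2 * (z1 * d1 + b1 * d2) / (z1 * d2)) + a1 * b2 =
      (y1 * z2 * (z1 * d1 + b1 * d2) + z1 * d2 * a1 * b2) / (z1 * d2) := by
    field_simp
  obtain ⟨hR, hy1, -, hy2, ha2⟩ := (sergeevS2Ok_iff_of_sum_eq_div sR (by positivity)).1 h3
  rw [lift2589_eq (sergeevS2_eq_of_sum_eq sR)] at h4 h5 ⊢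
  have sU : x1 * (z1 * d1 / k) + y1 * (z2 * (z1 * d1 + b1 * d2) / (z1 * d2)) / k * d2 =
      (x1 * z1 ^ 2 * d1 + y1 * z2 * (z1 * d1 + b1 * d2)) / (k * z1) := by
    field_simp
  obtain ⟨hU, hx1, -, hx2, -⟩ := (sergeevS2Ok_iff_of_sum_eq_div sU (by positivity)).1 h4
  rw [lift1567_eq (sergeevS2_eq_of_sum_eq sU)] at h5 ⊢
  have sW : x1 * (y1 * (z2 * (z1 * d1 + b1 * d2) / (z1 * d2)) / k) * d2 /
        ((x1 * z1 ^ 2 * d1 + y1 * z2 * (z1 * d1 + b1 * d2)) / (k * z1)) *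
          (z1 * b1 * d2 / (z1 * d1 + b1 * d2)) +
        y1 * a1 * b2 / ((y1 * z2 * (z1 * d1 + b1 * d2) + z1 * d2 * a1 * b2) / (z1 * d2)) * z2 =
      y1 * z1 * z2 * d2 * (z1 * d1 + b1 * d2) *
          (x1 * y1 * z2 * b1 + (x1 * z1 + y1 * z2) * a1 * b2) /
        ((x1 * z1 ^ 2 * d1 + y1 * z2 * (z1 * d1 + b1 * d2)) *
          (y1 * z2 * (z1 * d1 + b1 * d2) + z1 * d2 * a1 * b2)) := by
    field_simp
    ring
  obtain ⟨hW, -, -, -, -⟩ := (sergeevS2Ok_iff_of_sum_eq_div sW (by positivity)).1 h5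
  replace hW := right_ne_zero_of_mul hW
  rw [lift1234_eq (sergeevS2_eq_of_sum_eq sW)]
  simp only [sergeevS2FourSimplexValue]
  generalize y1 * z2 * (z1 * d1 + b1 * d2) + z1 * d2 * a1 * b2 = R at hR ⊢
  generalize x1 * z1 ^ 2 * d1 + y1 * z2 * (z1 * d1 + b1 * d2) = U at hU ⊢
  generalize x1 * y1 * z2 * b1 + (x1 * z1 + y1 * z2) * a1 * b2 = W at hW ⊢
  generalize z1 * d1 + b1 * d2 = Q at hQ ⊢
  generalize t1 * e1 + c1 * e2 = P at hP ⊢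
  ext <;> field_simp

theorem sergeevS2_fourSimplex_rhs_eq {k : ℂ} (hk : k ≠ 0)
    (p : (ℂ × ℂ) × (ℂ × ℂ) × (ℂ × ℂ) × (ℂ × ℂ) × (ℂ × ℂ) × (ℂ × ℂ) × (ℂ × ℂ) × (ℂ × ℂ) ×
      (ℂ × ℂ) × (ℂ × ℂ))
    (h6 : sergeevS2Ok (proj1234 p))
    (h7 : sergeevS2Ok (proj1567 (lift1234 (sergeevS2 k) p)))
    (h8 : sergeevS2Ok (proj2589 (lift1567 (sergeevS2 k) (lift1234 (sergeevS2 k) p))))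
    (h9 : sergeevS2Ok (proj368X
      (lift2589 (sergeevS2 k) (lift1567 (sergeevS2 k) (lift1234 (sergeevS2 k) p)))))
    (h10 : sergeevS2Ok (proj479X (lift368X (sergeevS2 k)
      (lift2589 (sergeevS2 k) (lift1567 (sergeevS2 k) (lift1234 (sergeevS2 k) p)))))) :
    lift479X (sergeevS2 k) (lift368X (sergeevS2 k)
      (lift2589 (sergeevS2 k) (lift1567 (sergeevS2 k) (lift1234 (sergeevS2 k) p)))) =
        sergeevS2FourSimplexValue k p := by
  obtain ⟨⟨x1, x2⟩, ⟨y1, y2⟩, ⟨z1, z2⟩, ⟨t1, t2⟩, ⟨a1, a2⟩, ⟨b1, b2⟩, ⟨c1, c2⟩, ⟨d1, d2⟩, ⟨e1, e2⟩,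
    ⟨f1, f2⟩⟩ := p
  obtain ⟨hD, hx1, hz2, hx2, hy2⟩ := h6
  rw [lift1234_eq (sergeevS2_eq_of_sum_eq rfl)] at h7 h8 h9 h10 ⊢
  have sW : x1 * y1 * z2 / (x1 * z1 + y1 * z2) * b1 + a1 * b2 =
      (x1 * y1 * z2 * b1 + (x1 * z1 + y1 * z2) * a1 * b2) / (x1 * z1 + y1 * z2) := by
    field_simp
  obtain ⟨hW, hxyz, hb2, -, ha2⟩ := (sergeevS2Ok_iff_of_sum_eq_div sW hD).1 h7
  have hy1 : y1 ≠ 0 := by rintro rfl; simp at hxyz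
  rw [lift1567_eq (sergeevS2_eq_of_sum_eq sW)] at h8 h9 h10 ⊢
  have sU : x1 * z1 / k * d1 + x1 * y1 * z2 / (x1 * z1 + y1 * z2) * b1 / k * d2 =
      x1 * (x1 * z1 ^ 2 * d1 + y1 * z2 * (z1 * d1 + b1 * d2)) / (k * (x1 * z1 + y1 * z2)) := by
    field_simp
    ring
  obtain ⟨hU, hxz, hd2, -, -⟩ := (sergeevS2Ok_iff_of_sum_eq_div sU (by positivity)).1 h8
  replace hU := right_ne_zero_of_mul hU
  have hz1 : z1 ≠ 0 := by rintro rfl; simp at hxz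
  rw [lift2589_eq (sergeevS2_eq_of_sum_eq sU)] at h9 h10 ⊢
  have sR : x2 * (x1 * z1 + y1 * z2) / (x1 * z2) *
        (z2 * (x1 * (x1 * z1 ^ 2 * d1 + y1 * z2 * (z1 * d1 + b1 * d2)) / (k * (x1 * z1 + y1 * z2))) /
          (x1 * z1 / k * d2)) +
      x2 * ((x1 * y1 * z2 * b1 + (x1 * z1 + y1 * z2) * a1 * b2) / (x1 * z1 + y1 * z2)) /
          (x1 * y1 * z2 / (x1 * z1 + y1 * z2) * b2) * b2 =
      x2 * (x1 * z1 + y1 * z2) * (y1 * z2 * (z1 * d1 + b1 * d2) + z1 * d2 * a1 * b2) /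
        (x1 * y1 * z1 * z2 * d2) := by
    field_simp
    ring
  obtain ⟨hR, -, -, -, -⟩ := (sergeevS2Ok_iff_of_sum_eq_div sR (by positivity)).1 h9
  replace hR := right_ne_zero_of_mul hR
  rw [lift368X_eq (sergeevS2_eq_of_sum_eq sR)] at h10 ⊢
  have sP : t1 * z2 / x2 * (e1 * d2 / z2) + c1 * b2 / x2 * (e2 * d2 / b2) =
      d2 * (t1 * e1 + c1 * e2) / x2 := by
    field_simp
  obtain ⟨hP, htz, hed, hty, hcb⟩ := (sergeevS2Ok_iff_of_sum_eq_div sP hx2).1 h10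
  replace hP := right_ne_zero_of_mul hP
  have ht1 : t1 ≠ 0 := by rintro rfl; simp at htz
  have he2 : e2 ≠ 0 := by rintro rfl; simp at hed
  have ht2 : t2 ≠ 0 := by rintro rfl; simp at hty
  have hc2 : c2 ≠ 0 := by rintro rfl; simp at hcb
  rw [lift479X_eq (sergeevS2_eq_of_sum_eq sP)]
  simp only [sergeevS2FourSimplexValue]
  generalize y1 * z2 * (z1 * d1 + b1 * d2) + z1 * d2 * a1 * b2 = R at hR ⊢
  generalize x1 * z1 ^ 2 * d1 + y1 * z2 * (z1 * d1 + b1 * d2) = U at hU ⊢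
  generalize x1 * y1 * z2 * b1 + (x1 * z1 + y1 * z2) * a1 * b2 = W at hW ⊢
  generalize x1 * z1 + y1 * z2 = D at hD ⊢
  generalize t1 * e1 + c1 * e2 = P at hP ⊢
  ext <;> field_simp

/-- `S₂` satisfies the set-theoretical 4-simplex equation,
wherever all denominators are nonzero. -/
theorem sergeevS2_four_simplex (k : ℂ) (hk : k ≠ 0)
    (p : (ℂ × ℂ) × (ℂ × ℂ) × (ℂ × ℂ) × (ℂ × ℂ) × (ℂ × ℂ) × (ℂ × ℂ) × (ℂ × ℂ) × (ℂ × ℂ) × (ℂ × ℂ) × (ℂ × ℂ))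
    (h1 : sergeevS2Ok (proj479X p))
    (h2 : sergeevS2Ok (proj368X (lift479X (sergeevS2 k) p)))
    (h3 : sergeevS2Ok (proj2589 (lift368X (sergeevS2 k) (lift479X (sergeevS2 k) p))))
    (h4 : sergeevS2Ok (proj1567 (lift2589 (sergeevS2 k) (lift368X (sergeevS2 k) (lift479X (sergeevS2 k) p)))))
    (h5 : sergeevS2Ok (proj1234 (lift1567 (sergeevS2 k) (lift2589 (sergeevS2 k) (lift368X (sergeevS2 k) (lift479X (sergeevS2 k) p))))))
    (h6 : sergeevS2Ok (proj1234 p))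
    (h7 : sergeevS2Ok (proj1567 (lift1234 (sergeevS2 k) p)))
    (h8 : sergeevS2Ok (proj2589 (lift1567 (sergeevS2 k) (lift1234 (sergeevS2 k) p))))
    (h9 : sergeevS2Ok (proj368X (lift2589 (sergeevS2 k) (lift1567 (sergeevS2 k) (lift1234 (sergeevS2 k) p)))))
    (h10 : sergeevS2Ok (proj479X (lift368X (sergeevS2 k) (lift2589 (sergeevS2 k) (lift1567 (sergeevS2 k) (lift1234 (sergeevS2 k) p)))))) :
    lift1234 (sergeevS2 k) (lift1567 (sergeevS2 k) (lift2589 (sergeevS2 k) (lift368X (sergeevS2 k) (lift479X (sergeevS2 k) p))))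
      = lift479X (sergeevS2 k) (lift368X (sergeevS2 k) (lift2589 (sergeevS2 k) (lift1567 (sergeevS2 k) (lift1234 (sergeevS2 k) p)))) := by
  rw [sergeevS2_fourSimplex_lhs_eq hk p h1 h2 h3 h4 h5,
    sergeevS2_fourSimplex_rhs_eq hk p h6 h7 h8 h9 h10]
end

section
/- The Hirota map T(x,y,z) = (xy/(x+z), x+z, yz/(x+z)) satisfies the local Yang–Baxter equation L³₁₂(u) L³₁₃(v) L³₂₃(w) = L³₂₃(z) L³₁₃(y) L³₁₂(x), where (u,v,w) = T(x,y,z) and L(x) is the 2×2 matrix with rows (x, 1) and (1, 0), provided x+z ≠ 0. -/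
/-! Both triple products have the shape `!![·, ·, 1; ·, 1, 0; 1, 0, 0]`, so the local Yang–Baxter
equation reduces to the three scalar equations `u v = x y`, `u + w = y`, `v = x + z`; the Hirota
map is their unique solution when `x + z ≠ 0`. -/

open Matrix

/-- Embedding of `L(x) = [[x,1],[1,0]]` into rows/columns (1,2) of the 3×3 identity. -/
noncomputable def hirotaL12 (x : ℂ) : Matrix (Fin 3) (Fin 3) ℂ :=
  !![x, 1, 0; 1, 0, 0; 0, 0, 1]

/-- Embedding of `L(x) = [[x,1],[1,0]]` into rows/columns (1,3) of the 3×3 identity. -/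
noncomputable def hirotaL13 (x : ℂ) : Matrix (Fin 3) (Fin 3) ℂ :=
  !![x, 0, 1; 0, 1, 0; 1, 0, 0]

/-- Embedding of `L(x) = [[x,1],[1,0]]` into rows/columns (2,3) of the 3×3 identity. -/
noncomputable def hirotaL23 (x : ℂ) : Matrix (Fin 3) (Fin 3) ℂ :=
  !![1, 0, 0; 0, x, 1; 0, 1, 0]

theorem hirotaL12_mul_hirotaL13_mul_hirotaL23 (u v w : ℂ) :
    hirotaL12 u * hirotaL13 v * hirotaL23 w = !![u * v, u + w, 1; v, 1, 0; 1, 0, 0] := by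
  simp only [hirotaL12, hirotaL13, hirotaL23, mul_fin_three]
  ring_nf

theorem hirotaL23_mul_hirotaL13_mul_hirotaL12 (x y z : ℂ) :
    hirotaL23 z * hirotaL13 y * hirotaL12 x = !![x * y, y, 1; x + z, 1, 0; 1, 0, 0] := by
  simp only [hirotaL12, hirotaL13, hirotaL23, mul_fin_three]
  ring_nf

theorem hirota_yang_baxter_iff (u v w x y z : ℂ) :
    hirotaL12 u * hirotaL13 v * hirotaL23 w = hirotaL23 z * hirotaL13 y * hirotaL12 x ↔
      u * v = x * y ∧ u + w = y ∧ v = x + z := by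
  rw [hirotaL12_mul_hirotaL13_mul_hirotaL23, hirotaL23_mul_hirotaL13_mul_hirotaL12]
  simp only [EmbeddingLike.apply_eq_iff_eq, vecCons_inj, and_true, and_assoc]

/-- The Hirota map satisfies the local Yang–Baxter equation
`L³₁₂(u) L³₁₃(v) L³₂₃(w) = L³₂₃(z) L³₁₃(y) L³₁₂(x)` with
`(u,v,w) = (xy/(x+z), x+z, yz/(x+z))`, provided `x + z ≠ 0`. -/
theorem hirota_local_yang_baxter (x y z : ℂ) (h : x + z ≠ 0) :
    hirotaL12 (x * y / (x + z)) * hirotaL13 (x + z) * hirotaL23 (y * z / (x + z))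
      = hirotaL23 z * hirotaL13 y * hirotaL12 x := by
  rw [hirota_yang_baxter_iff]
  exact ⟨by field_simp, by field_simp, rfl⟩
end

section
/- The map S₁ of the Hirota-type 4-simplex extension preserves the functions I₁ = x₁y₁, I₂ = x₂y₂, I₃ = x₂+y₂, I₄ = z₂t₂, I₅ = z₂+t₂, and I₆ = x₂z₂t₁; that is, each Iⱼ composed with S₁ equals Iⱼ, wherever the denominators are nonzero. -/
/-- The Hirota-type 4-simplex map `S₁` on `ℂ⁸`. -/
noncomputable def hirotaS1 :
    ℂ × ℂ × ℂ × ℂ × ℂ × ℂ × ℂ × ℂ → ℂ × ℂ × ℂ × ℂ × ℂ × ℂ × ℂ × ℂ :=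
  fun (x1, x2, y1, y2, z1, z2, t1, t2) =>
    (x1 * y1 * z2 / (x2 * z1 + x1 * z2), y2,
     (x2 * z1 + x1 * z2) / z2, x2,
     t2 * x2 * y1 * z1 / (y2 * (x2 * z1 + x1 * z2)), t2,
     t1 * x2 * z2 / (t2 * y2), z2)

/-- The map `S₁` preserves the functions `I₁ = x₁y₁`, `I₂ = x₂y₂`,
`I₃ = x₂ + y₂`, `I₄ = z₂t₂`, `I₅ = z₂ + t₂` and `I₆ = x₂z₂t₁`,
wherever the denominators are nonzero. -/
theorem hirotaS1_invariants (x1 x2 y1 y2 z1 z2 t1 t2 : ℂ)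
    (hD : x2 * z1 + x1 * z2 ≠ 0) (hz2 : z2 ≠ 0) (hy2 : y2 ≠ 0) (ht2 : t2 ≠ 0) :
    (fun (p : ℂ × ℂ × ℂ × ℂ × ℂ × ℂ × ℂ × ℂ) => p.1 * p.2.2.1)
        (hirotaS1 (x1, x2, y1, y2, z1, z2, t1, t2)) = x1 * y1 ∧
    (fun (p : ℂ × ℂ × ℂ × ℂ × ℂ × ℂ × ℂ × ℂ) => p.2.1 * p.2.2.2.1)
        (hirotaS1 (x1, x2, y1, y2, z1, z2, t1, t2)) = x2 * y2 ∧
    (fun (p : ℂ × ℂ × ℂ × ℂ × ℂ × ℂ × ℂ × ℂ) => p.2.1 + p.2.2.2.1)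
        (hirotaS1 (x1, x2, y1, y2, z1, z2, t1, t2)) = x2 + y2 ∧
    (fun (p : ℂ × ℂ × ℂ × ℂ × ℂ × ℂ × ℂ × ℂ) => p.2.2.2.2.2.1 * p.2.2.2.2.2.2.2)
        (hirotaS1 (x1, x2, y1, y2, z1, z2, t1, t2)) = z2 * t2 ∧
    (fun (p : ℂ × ℂ × ℂ × ℂ × ℂ × ℂ × ℂ × ℂ) => p.2.2.2.2.2.1 + p.2.2.2.2.2.2.2)
        (hirotaS1 (x1, x2, y1, y2, z1, z2, t1, t2)) = z2 + t2 ∧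
    (fun (p : ℂ × ℂ × ℂ × ℂ × ℂ × ℂ × ℂ × ℂ) => p.2.1 * p.2.2.2.2.2.1 * p.2.2.2.2.2.2.1)
        (hirotaS1 (x1, x2, y1, y2, z1, z2, t1, t2)) = x2 * z2 * t1 := by
  simp only [hirotaS1]
  refine ⟨?_, mul_comm _ _, add_comm _ _, mul_comm _ _, add_comm _ _, ?_⟩
  · rw [div_mul_div_cancel₀ hD, mul_div_cancel_right₀ _ hz2]
  · rw [mul_comm y2 t2, mul_div_cancel₀ _ (mul_ne_zero ht2 hy2)]
    ring
end

section
/- The map S₁(x₁,x₂,y₁,y₂,z₁,z₂,t₁,t₂) = (x₁y₁z₂/(x₂z₁+x₁z₂), y₂, (x₂z₁+x₁z₂)/z₂, x₂, t₂x₂y₁z₁/(y₂(x₂z₁+x₁z₂)), t₂, t₁x₂z₂/(t₂y₂), z₂) is involutive: S₁ ∘ S₁ = id wherever all denominators occurring in the composition are nonzero. -/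
/-- All denominators occurring in `S₁` are nonzero. -/
def hirotaS1Ok : ℂ × ℂ × ℂ × ℂ × ℂ × ℂ × ℂ × ℂ → Prop :=
  fun (x1, x2, _y1, y2, z1, z2, _t1, t2) =>
    x2 * z1 + x1 * z2 ≠ 0 ∧ z2 ≠ 0 ∧ y2 ≠ 0 ∧ t2 ≠ 0

theorem hirotaS1_denominator_image_eq {K : Type*} [Field K] {x1 x2 y1 y2 z1 z2 t2 : K}
    (hA : x2 * z1 + x1 * z2 ≠ 0) (hy2 : y2 ≠ 0) :
    y2 * (t2 * x2 * y1 * z1 / (y2 * (x2 * z1 + x1 * z2))) +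
      x1 * y1 * z2 / (x2 * z1 + x1 * z2) * t2 = t2 * y1 := by
  field_simp

/-- `S₁` is involutive: `S₁ ∘ S₁ = id` wherever all denominators occurring
in the composition are nonzero. -/
theorem hirotaS1_involutive (p : ℂ × ℂ × ℂ × ℂ × ℂ × ℂ × ℂ × ℂ)
    (h1 : hirotaS1Ok p) (h2 : hirotaS1Ok (hirotaS1 p)) :
    hirotaS1 (hirotaS1 p) = p := by
  obtain ⟨x1, x2, y1, y2, z1, z2, t1, t2⟩ := p
  obtain ⟨hA, hz2, hy2, ht2⟩ := h1
  obtain ⟨hA', -, hx2, -⟩ := h2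
  rw [hirotaS1_denominator_image_eq hA hy2] at hA'
  have hy1 : y1 ≠ 0 := right_ne_zero_of_mul hA'
  simp only [hirotaS1, hirotaS1_denominator_image_eq hA hy2, Prod.mk.injEq]
  generalize x2 * z1 + x1 * z2 = A at hA ⊢
  refine ⟨?_, trivial, ?_, trivial, ?_, trivial, ?_, trivial⟩ <;> field_simp
end

section
/- The map Ŝ satisfies the local tetrahedron (Lax) equation K⁶₁₂₃(u₁,u₂) K⁶₁₄₅(v₁,v₂) K⁶₂₄₆(w₁,w₂) K⁶₃₅₆(r₁,r₂) = K⁶₃₅₆(t₁,t₂) K⁶₂₄₆(z₁,z₂) K⁶₁₄₅(y₁,y₂) K⁶₁₂₃(x₁,x₂) with K(x₁,x₂) the 3×3 matrix with rows (x₁, 1, 0), (1/x₂, 0, 0), (0, 0, x₂), where (u₁,u₂,v₁,v₂,w₁,w₂,r₁,r₂) = Ŝ(x₁,x₂,y₁,y₂,z₁,z₂,t₁,t₂), for all x,y,z,t with nonzero second components and x₁x₂+y₂z₁ ≠ 0. -/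
open Matrix

/-- Embedding of `K(x₁,x₂) = [[x₁,1,0],[1/x₂,0,0],[0,0,x₂]]` into rows/columns
(1,2,3) of the 6×6 identity. -/
noncomputable def K123 (a b : ℂ) : Matrix (Fin 6) (Fin 6) ℂ :=
  !![a, 1, 0, 0, 0, 0;
     1/b, 0, 0, 0, 0, 0;
     0, 0, b, 0, 0, 0;
     0, 0, 0, 1, 0, 0;
     0, 0, 0, 0, 1, 0;
     0, 0, 0, 0, 0, 1]

/-- Embedding of `K(x₁,x₂)` into rows/columns (1,4,5) of the 6×6 identity. -/
noncomputable def K145 (a b : ℂ) : Matrix (Fin 6) (Fin 6) ℂ :=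
  !![a, 0, 0, 1, 0, 0;
     0, 1, 0, 0, 0, 0;
     0, 0, 1, 0, 0, 0;
     1/b, 0, 0, 0, 0, 0;
     0, 0, 0, 0, b, 0;
     0, 0, 0, 0, 0, 1]

/-- Embedding of `K(x₁,x₂)` into rows/columns (2,4,6) of the 6×6 identity. -/
noncomputable def K246 (a b : ℂ) : Matrix (Fin 6) (Fin 6) ℂ :=
  !![1, 0, 0, 0, 0, 0;
     0, a, 0, 1, 0, 0;
     0, 0, 1, 0, 0, 0;
     0, 1/b, 0, 0, 0, 0;
     0, 0, 0, 0, 1, 0;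
     0, 0, 0, 0, 0, b]

/-- Embedding of `K(x₁,x₂)` into rows/columns (3,5,6) of the 6×6 identity. -/
noncomputable def K356 (a b : ℂ) : Matrix (Fin 6) (Fin 6) ℂ :=
  !![1, 0, 0, 0, 0, 0;
     0, 1, 0, 0, 0, 0;
     0, 0, a, 0, 1, 0;
     0, 0, 0, 1, 0, 0;
     0, 0, 1/b, 0, 0, 0;
     0, 0, 0, 0, 0, b]

/-! For arbitrary parameters both sides multiply out to explicit sparse matrices.
Comparing them entry by entry leaves five rational identities between the components
of `Ŝ` and its arguments; these are where the formulas defining `Ŝ` come from. -/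

theorem K123_mul_K145_mul_K246_mul_K356 (a b c d e f g h : ℂ) :
    K123 a b * K145 c d * K246 e f * K356 g h =
      !![a * c, e + a / f, 0, 1, 0, 0;
         c / b, 1 / (b * f), 0, 0, 0, 0;
         0, 0, b * g, 0, b, 0;
         1 / d, 0, 0, 0, 0, 0;
         0, 0, d / h, 0, 0, 0;
         0, 0, 0, 0, 0, f * h] := by
  simp [K123, K145, K246, K356, cons_mul, vecMul_cons, div_eq_mul_inv, mul_comm]

theorem K356_mul_K246_mul_K145_mul_K123 (a b c d e f g h : ℂ) :
    K356 g h * K246 e f * K145 c d * K123 a b =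
      !![a * c, c, 0, 1, 0, 0;
         a / d + e / b, 1 / d, 0, 0, 0, 0;
         0, 0, g * b, 0, d, 0;
         1 / (b * f), 0, 0, 0, 0, 0;
         0, 0, b / h, 0, 0, 0;
         0, 0, 0, 0, 0, h * f] := by
  simp [K123, K145, K246, K356, cons_mul, vecMul_cons, div_eq_mul_inv, mul_comm]

theorem hirotaShat_lax_general (x1 x2 y1 y2 z1 z2 t1 t2 : ℂ)
    (hx2 : x2 ≠ 0) (hy2 : y2 ≠ 0) (hz2 : z2 ≠ 0)
    (hD : x1 * x2 + y2 * z1 ≠ 0) :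
    K123 (x1 * x2 * y1 / (x1 * x2 + y2 * z1)) y2
        * K145 ((x1 * x2 + y2 * z1) / x2) (x2 * z2)
        * K246 (y1 * y2 * z1 / (x1 * x2 + y2 * z1)) 1
        * K356 (t1 * x2 / y2) (t2 * z2)
      = K356 t1 t2 * K246 z1 z2 * K145 y1 y2 * K123 x1 x2 := by
  have h00 : x1 * x2 * y1 / (x1 * x2 + y2 * z1) * ((x1 * x2 + y2 * z1) / x2) =
      x1 * y1 := by
    field_simp
  have h01 : y1 * y2 * z1 / (x1 * x2 + y2 * z1) + x1 * x2 * y1 / (x1 * x2 + y2 * z1) = y1 := by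
    field_simp; ring
  have h10 : (x1 * x2 + y2 * z1) / x2 / y2 = x1 / y2 + z1 / x2 := by field_simp
  have h22 : y2 * (t1 * x2 / y2) = t1 * x2 := mul_div_cancel₀ _ hy2
  have h42 : x2 * z2 / (t2 * z2) = x2 / t2 := mul_div_mul_right _ _ hz2
  rw [K123_mul_K145_mul_K246_mul_K356, K356_mul_K246_mul_K145_mul_K123]
  ext i j
  fin_cases i <;> fin_cases j <;> simp [h00, h01, h10, h22, h42]

/-- The Hirota-type map `Ŝ` satisfies the local tetrahedron (Lax) equation for
`K(x₁,x₂) = [[x₁,1,0],[1/x₂,0,0],[0,0,x₂]]`. -/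
theorem hirotaShat_lax (x1 x2 y1 y2 z1 z2 t1 t2 : ℂ)
    (hx2 : x2 ≠ 0) (hy2 : y2 ≠ 0) (hz2 : z2 ≠ 0) (ht2 : t2 ≠ 0)
    (hD : x1 * x2 + y2 * z1 ≠ 0) :
    K123 (x1 * x2 * y1 / (x1 * x2 + y2 * z1)) y2
        * K145 ((x1 * x2 + y2 * z1) / x2) (x2 * z2)
        * K246 (y1 * y2 * z1 / (x1 * x2 + y2 * z1)) 1
        * K356 (t1 * x2 / y2) (t2 * z2)
      = K356 t1 t2 * K246 z1 z2 * K145 y1 y2 * K123 x1 x2 :=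
  hirotaShat_lax_general x1 x2 y1 y2 z1 z2 t1 t2 hx2 hy2 hz2 hD
end

section
/- The map S₂ (electric network type) preserves the functions J₁ = x₁y₁, J₂ = x₂y₂, J₃ = z₁t₁, and J₄ = z₁+t₁: each composed with S₂ equals itself wherever denominators are nonzero. Moreover, these four invariants are functionally independent at generic points. -/
/-- The denominator `D = x₁x₂ + z₁z₂ + x₁x₂y₁y₂z₁z₂` of the electric network
type 4-simplex map, with coordinates `(x₁,x₂,y₁,y₂,z₁,z₂,t₁,t₂) = (p 0, …, p 7)`. -/
noncomputable def enD (p : Fin 8 → ℂ) : ℂ :=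
  p 0 * p 1 + p 4 * p 5 + p 0 * p 1 * p 2 * p 3 * p 4 * p 5

/-- The electric network type 4-simplex map `S₂` on `ℂ⁸`. -/
noncomputable def enS2 (p : Fin 8 → ℂ) : Fin 8 → ℂ :=
  ![p 0 * p 2, p 1 * p 3 / enD p, 1, enD p,
    p 6, p 2 * p 3 * p 4 * p 5 / (p 6 * enD p), p 4, p 6 * p 7 / p 4]

/-- `J₁ = x₁y₁`. -/
noncomputable def enJ1 (p : Fin 8 → ℂ) : ℂ := p 0 * p 2
/-- `J₂ = x₂y₂`. -/
noncomputable def enJ2 (p : Fin 8 → ℂ) : ℂ := p 1 * p 3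
/-- `J₃ = z₁t₁`. -/
noncomputable def enJ3 (p : Fin 8 → ℂ) : ℂ := p 4 * p 6
/-- `J₄ = z₁ + t₁`. -/
noncomputable def enJ4 (p : Fin 8 → ℂ) : ℂ := p 4 + p 6


/-!
`S₂` sends `x₁y₁ ↦ (x₁y₁)·1` and `x₂y₂ ↦ (x₂y₂/D)·D`, and it swaps `z₁` and `t₁`, so the
symmetric functions `z₁t₁` and `z₁ + t₁` are preserved. The gradients of the four invariants
involve the disjoint coordinate pairs `(x₁, y₁)`, `(x₂, y₂)` and `(z₁, t₁)`; evaluated on the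
basis vectors of `x₁, x₂, z₁, t₁` they form a block diagonal matrix with determinant
`y₁ y₂ (t₁ - z₁)`, so they are independent wherever this does not vanish.
-/

theorem ContinuousLinearMap.linearIndependent_of_det_ne_zero {ι 𝕜 E : Type*} [Fintype ι]
    [DecidableEq ι] [Field 𝕜] [TopologicalSpace 𝕜] [IsTopologicalRing 𝕜]
    [AddCommGroup E] [Module 𝕜 E] [TopologicalSpace E]
    (φ : ι → E →L[𝕜] 𝕜) (v : ι → E) (h : (Matrix.of fun i j => φ i (v j)).det ≠ 0) :
    LinearIndependent 𝕜 φ :=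
  let eval : (E →L[𝕜] 𝕜) →ₗ[𝕜] ι → 𝕜 :=
    { toFun := fun ψ j => ψ (v j), map_add' := fun _ _ => rfl, map_smul' := fun _ _ => rfl }
  .of_comp eval (Matrix.linearIndependent_rows_of_det_ne_zero h)

theorem enJ1_enS2 (p : Fin 8 → ℂ) : enJ1 (enS2 p) = enJ1 p := by
  simp [enJ1, enS2]

theorem enJ2_enS2 {p : Fin 8 → ℂ} (hD : enD p ≠ 0) : enJ2 (enS2 p) = enJ2 p :=
  div_mul_cancel₀ (p 1 * p 3) hD

theorem enJ3_enS2 (p : Fin 8 → ℂ) : enJ3 (enS2 p) = enJ3 p :=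
  mul_comm (p 6) (p 4)

theorem enJ4_enS2 (p : Fin 8 → ℂ) : enJ4 (enS2 p) = enJ4 p :=
  add_comm (p 6) (p 4)

section Gradients

variable (p : Fin 8 → ℂ)

theorem hasFDerivAt_enJ1 :
    HasFDerivAt enJ1 (p 0 • .proj 2 + p 2 • .proj 0 : (Fin 8 → ℂ) →L[ℂ] ℂ) p :=
  show HasFDerivAt (fun q : Fin 8 → ℂ => q 0 * q 2) _ p from
    (hasFDerivAt_apply 0 p).mul (hasFDerivAt_apply 2 p)

theorem hasFDerivAt_enJ2 :
    HasFDerivAt enJ2 (p 1 • .proj 3 + p 3 • .proj 1 : (Fin 8 → ℂ) →L[ℂ] ℂ) p :=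
  show HasFDerivAt (fun q : Fin 8 → ℂ => q 1 * q 3) _ p from
    (hasFDerivAt_apply 1 p).mul (hasFDerivAt_apply 3 p)

theorem hasFDerivAt_enJ3 :
    HasFDerivAt enJ3 (p 4 • .proj 6 + p 6 • .proj 4 : (Fin 8 → ℂ) →L[ℂ] ℂ) p :=
  show HasFDerivAt (fun q : Fin 8 → ℂ => q 4 * q 6) _ p from
    (hasFDerivAt_apply 4 p).mul (hasFDerivAt_apply 6 p)

theorem hasFDerivAt_enJ4 :
    HasFDerivAt enJ4 (.proj 4 + .proj 6 : (Fin 8 → ℂ) →L[ℂ] ℂ) p :=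
  show HasFDerivAt (fun q : Fin 8 → ℂ => q 4 + q 6) _ p from
    (hasFDerivAt_apply 4 p).add (hasFDerivAt_apply 6 p)

theorem linearIndependent_fderiv_enJ (h2 : p 2 ≠ 0) (h3 : p 3 ≠ 0) (h46 : p 4 ≠ p 6) :
    LinearIndependent ℂ
      ![fderiv ℂ enJ1 p, fderiv ℂ enJ2 p, fderiv ℂ enJ3 p, fderiv ℂ enJ4 p] := by
  rw [(hasFDerivAt_enJ1 p).fderiv, (hasFDerivAt_enJ2 p).fderiv, (hasFDerivAt_enJ3 p).fderiv,
    (hasFDerivAt_enJ4 p).fderiv]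
  refine ContinuousLinearMap.linearIndependent_of_det_ne_zero _
    (fun j => Pi.single (![0, 1, 4, 6] j) 1) ?_
  simp [Matrix.det_succ_row_zero, Fin.sum_univ_succ, Pi.single_apply, h2, h3, add_neg_eq_zero,
    h46.symm]

end Gradients

/-- `S₂` preserves `J₁ = x₁y₁`, `J₂ = x₂y₂`, `J₃ = z₁t₁` and `J₄ = z₁+t₁`
wherever denominators are nonzero; moreover these four invariants are
functionally independent at some point (their gradients are linearly
independent there). -/
theorem enS2_invariants_and_independence :
    (∀ p : Fin 8 → ℂ, enD p ≠ 0 → p 6 ≠ 0 → p 4 ≠ 0 →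
      enJ1 (enS2 p) = enJ1 p ∧ enJ2 (enS2 p) = enJ2 p ∧
      enJ3 (enS2 p) = enJ3 p ∧ enJ4 (enS2 p) = enJ4 p) ∧
    ∃ p : Fin 8 → ℂ,
      LinearIndependent ℂ
        ![fderiv ℂ enJ1 p, fderiv ℂ enJ2 p, fderiv ℂ enJ3 p, fderiv ℂ enJ4 p] := by
  exact ⟨fun p hD _ _ => ⟨enJ1_enS2 p, enJ2_enS2 hD, enJ3_enS2 p, enJ4_enS2 p⟩,
    fun i => ((i : ℕ) : ℂ), linearIndependent_fderiv_enJ _ (by norm_num) (by norm_num) (by norm_num)⟩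
end

section
/- The twelve-dimensional map (x₁,x₂,x₃,y₁,y₂,y₃,z₁,z₂,z₃,t₁,t₂,t₃) ↦ (y₁, y₂, x₁x₃z₂/(y₂z₁), x₁, x₂, (y₂y₃z₁ − x₁x₃z₂z₃)/x₁, y₁z₁/x₁, z₂, z₃, t₁x₂/y₂, t₂, t₃) satisfies the set-theoretical 4-simplex equation wherever all denominators are nonzero, and at (x₂,x₃,y₂,y₃,z₂,z₃,t₂,t₃) = (1,0,1,0,1,0,1,0) its nontrivial components reduce to the tetrahedron map (x,y,z) ↦ (y, x, yz/x). -/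
/-- The twelve-dimensional 4-simplex map on triples. -/
noncomputable def tripleS :
    (ℂ × ℂ × ℂ) × (ℂ × ℂ × ℂ) × (ℂ × ℂ × ℂ) × (ℂ × ℂ × ℂ) →
      (ℂ × ℂ × ℂ) × (ℂ × ℂ × ℂ) × (ℂ × ℂ × ℂ) × (ℂ × ℂ × ℂ) :=
  fun ((x1, x2, x3), (y1, y2, y3), (z1, z2, z3), (t1, t2, t3)) =>
    ((y1, y2, x1 * x3 * z2 / (y2 * z1)),
     (x1, x2, (y2 * y3 * z1 - x1 * x3 * z2 * z3) / x1),
     (y1 * z1 / x1, z2, z3),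
     (t1 * x2 / y2, t2, t3))

/-- All denominators occurring in the map are nonzero. -/
def tripleSOk :
    (ℂ × ℂ × ℂ) × (ℂ × ℂ × ℂ) × (ℂ × ℂ × ℂ) × (ℂ × ℂ × ℂ) → Prop :=
  fun ((x1, x2, x3), (y1, y2, y3), (z1, z2, z3), (t1, t2, t3)) =>
    y2 ≠ 0 ∧ z1 ≠ 0 ∧ x1 ≠ 0

/-!
On second coordinates `tripleS` only swaps its first two factors, so there the 4-simplex
equation is the braid relation among the transpositions (1 2), (1 5), (2 5) (the factors 3, 6
and 4, 7 are swapped independently). On first and third coordinates both sides of the equation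
are rational maps; unfolding them, all but nine of the thirty coordinates agree verbatim and the
remaining nine are rational identities. Naming the ten factors `x, y, z, t, a, …, f`, these
hold once `x₁, x₂, y₁, y₂, z₁, a₂, b₁, b₂` are nonzero, and each of these divides a denominator
met when the right-hand side is evaluated.
-/

def FourSimplexAt {X : Type*} (S : X × X × X × X → X × X × X × X)
    (p : X × X × X × X × X × X × X × X × X × X) : Prop :=
  lift1234 S (lift1567 S (lift2589 S (lift368X S (lift479X S p)))) =
    lift479X S (lift368X S (lift2589 S (lift1567 S (lift1234 S p))))

theorem tripleS_fourSimplexAt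
    {x₁ x₂ x₃ y₁ y₂ y₃ z₁ z₂ z₃ t₁ t₂ t₃ a₁ a₂ a₃ b₁ b₂ b₃ c₁ c₂ c₃ d₁ d₂ d₃ e₁ e₂ e₃ f₁ f₂ f₃ : ℂ}
    (hx₁ : x₁ ≠ 0) (hx₂ : x₂ ≠ 0) (hy₁ : y₁ ≠ 0) (hy₂ : y₂ ≠ 0) (hz₁ : z₁ ≠ 0)
    (ha₂ : a₂ ≠ 0) (hb₁ : b₁ ≠ 0) (hb₂ : b₂ ≠ 0) :
    FourSimplexAt tripleS ((x₁, x₂, x₃), (y₁, y₂, y₃), (z₁, z₂, z₃), (t₁, t₂, t₃), (a₁, a₂, a₃),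
      (b₁, b₂, b₃), (c₁, c₂, c₃), (d₁, d₂, d₃), (e₁, e₂, e₃), (f₁, f₂, f₃)) := by
  simp only [FourSimplexAt, tripleS, lift1234, lift1567, lift2589, lift368X, lift479X,
    Prod.mk.injEq, and_true, true_and]
  and_intros <;> field_simp
  all_goals ring

theorem tripleS_reduction (x y z t : ℂ) :
    tripleS ((x, 1, 0), (y, 1, 0), (z, 1, 0), (t, 1, 0))
      = ((y, 1, 0), (x, 1, 0), (y * z / x, 1, 0), (t, 1, 0)) := by
  simp [tripleS]

/-- The twelve-dimensional map satisfies the set-theoretical 4-simplex equation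
wherever all denominators are nonzero, and at
`(x₂,x₃,y₂,y₃,z₂,z₃,t₂,t₃) = (1,0,1,0,1,0,1,0)` its nontrivial components reduce
to the tetrahedron map `(x,y,z) ↦ (y, x, yz/x)`. -/
theorem tripleS_four_simplex_and_reduction :
    (∀ p : (ℂ × ℂ × ℂ) × (ℂ × ℂ × ℂ) × (ℂ × ℂ × ℂ) × (ℂ × ℂ × ℂ) × (ℂ × ℂ × ℂ) ×
        (ℂ × ℂ × ℂ) × (ℂ × ℂ × ℂ) × (ℂ × ℂ × ℂ) × (ℂ × ℂ × ℂ) × (ℂ × ℂ × ℂ),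
      tripleSOk (proj479X p) →
      tripleSOk (proj368X (lift479X tripleS p)) →
      tripleSOk (proj2589 (lift368X tripleS (lift479X tripleS p))) →
      tripleSOk (proj1567 (lift2589 tripleS (lift368X tripleS (lift479X tripleS p)))) →
      tripleSOk (proj1234 (lift1567 tripleS (lift2589 tripleS (lift368X tripleS (lift479X tripleS p))))) →
      tripleSOk (proj1234 p) →
      tripleSOk (proj1567 (lift1234 tripleS p)) →
      tripleSOk (proj2589 (lift1567 tripleS (lift1234 tripleS p))) →
      tripleSOk (proj368X (lift2589 tripleS (lift1567 tripleS (lift1234 tripleS p)))) →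
      tripleSOk (proj479X (lift368X tripleS (lift2589 tripleS (lift1567 tripleS (lift1234 tripleS p))))) →
      lift1234 tripleS (lift1567 tripleS (lift2589 tripleS (lift368X tripleS (lift479X tripleS p))))
        = lift479X tripleS (lift368X tripleS (lift2589 tripleS (lift1567 tripleS (lift1234 tripleS p))))) ∧
    (∀ x1 y1 z1 t1 : ℂ, x1 ≠ 0 → z1 ≠ 0 →
      tripleS ((x1, 1, 0), (y1, 1, 0), (z1, 1, 0), (t1, 1, 0))
        = ((y1, 1, 0), (x1, 1, 0), (y1 * z1 / x1, 1, 0), (t1, 1, 0))) := by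
  refine ⟨?_, fun x y z t _ _ => tripleS_reduction x y z t⟩
  rintro ⟨⟨x₁, x₂, x₃⟩, ⟨y₁, y₂, y₃⟩, ⟨z₁, z₂, z₃⟩, ⟨t₁, t₂, t₃⟩, ⟨a₁, a₂, a₃⟩, ⟨b₁, b₂, b₃⟩,
    ⟨c₁, c₂, c₃⟩, ⟨d₁, d₂, d₃⟩, ⟨e₁, e₂, e₃⟩, ⟨f₁, f₂, f₃⟩⟩ - - - - - h1234 h1567 - h368X h479X
  simp only [tripleSOk, tripleS, lift1234, lift1567, lift2589, lift368X, proj1234, proj1567,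
    proj368X, proj479X, ne_eq, mul_eq_zero, div_eq_zero_iff, not_or] at h1234 h1567 h368X h479X
  apply tripleS_fourSimplexAt <;> tauto
end
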